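/- If a locally integrable function f on the open unit disc satisfies both the BWMO condition and the VWMO condition, then lim_{|z|→1} (1/|B(z)|) · sup{ |∫_{B(z̃,ζ)} (f(ξ) − f̂(z)) dA(ξ)| : z̃, ζ ∈ B(z), z̃ ≾ ζ } = 0. -/

import Mathlib

open MeasureTheory Set

noncomputable section

/-- The normalized area measure on the plane: planar Lebesgue measure divided by `π`. -/
def dA : Measure ℂ := (ENNReal.ofReal Real.pi)⁻¹ • volume

/-- The open unit disc `𝔻`. -/
def unitDisc : Set ℂ := {z : ℂ | ‖z‖ < 1}

/-- The argument `θ` of `z`, normalized to lie in `[0, 2π)`. -/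
def theta (z : ℂ) : ℝ := toIcoMod Real.two_pi_pos 0 (Complex.arg z)

/-- The angle of `ζ`, normalized to lie in `[theta z, theta z + 2π)`;
for `ζ ∈ B(z)` this is the angle `θ̃ ∈ [θ, θ + π(1-r)]` of the paper's convention. -/
def angFrom (z ζ : ℂ) : ℝ := toIcoMod Real.two_pi_pos (theta z) (Complex.arg ζ)

/-- The polar rectangle `{ρ e^{iφ} : r₁ ≤ ρ ≤ r₂, φ₁ ≤ φ ≤ φ₂}`. -/
def polarRect (r₁ r₂ φ₁ φ₂ : ℝ) : Set ℂ :=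
  {w : ℂ | ∃ ρ φ : ℝ, r₁ ≤ ρ ∧ ρ ≤ r₂ ∧ φ₁ ≤ φ ∧ φ ≤ φ₂ ∧
    w = (ρ : ℂ) * Complex.exp ((φ : ℂ) * Complex.I)}

/-- The set `B(z)` for `z = r e^{iθ} ∈ 𝔻`. -/
def Bz (z : ℂ) : Set ℂ :=
  polarRect ‖z‖ (1 - (1 - ‖z‖) / 2) (theta z) (theta z + Real.pi * (1 - ‖z‖))

/-- The set `B(z, ζ)` for `ζ ∈ B(z)`. -/
def Bzz (z ζ : ℂ) : Set ℂ := polarRect ‖z‖ ‖ζ‖ (theta z) (angFrom z ζ)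

/-- The set `B(ζ₁, ζ₂)` for points `ζ₁ ≾ ζ₂` of `B(z)`. -/
def Bsub (z ζ₁ ζ₂ : ℂ) : Set ℂ := polarRect ‖ζ₁‖ ‖ζ₂‖ (angFrom z ζ₁) (angFrom z ζ₂)

/-- The relation `ζ₁ ≾ ζ₂` for points of `B(z)`: `ρ₁ ≤ ρ₂` and `φ₁ ≤ φ₂`. -/
def precSim (z ζ₁ ζ₂ : ℂ) : Prop := ‖ζ₁‖ ≤ ‖ζ₂‖ ∧ angFrom z ζ₁ ≤ angFrom z ζ₂

/-- The average `f̂_K = (1/|K|) ∫_K f dA` of `f` over a set `K`. -/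
def avgOn (f : ℂ → ℂ) (K : Set ℂ) : ℂ := ((dA K).toReal)⁻¹ • ∫ w in K, f w ∂dA

/-- The average function `f̂(z) = f̂_{B(z)}`. -/
def avg (f : ℂ → ℂ) (z : ℂ) : ℂ := avgOn f (Bz z)

/-- The quantity `(1/|B(z)|) |∫_{B(z,ζ)} (f(ξ) - f̂(z)) dA(ξ)|`. -/
def wQuot (f : ℂ → ℂ) (z ζ : ℂ) : ℝ :=
  ((dA (Bz z)).toReal)⁻¹ * ‖∫ ξ in Bzz z ζ, (f ξ - avg f z) ∂dA‖

/-- The BWMO condition: `‖f‖_BWMO < ∞`. -/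
def IsBWMO (f : ℂ → ℂ) : Prop := ∃ C : ℝ, ∀ z ∈ unitDisc, ∀ ζ ∈ Bz z, wQuot f z ζ ≤ C

/-- The BWMO seminorm `‖f‖_BWMO`. -/
def bwmoNorm (f : ℂ → ℂ) : ℝ :=
  sSup {c : ℝ | ∃ z ∈ unitDisc, ∃ ζ ∈ Bz z, c = wQuot f z ζ}

/-- The VWMO condition:
`(1/|B(z)|) sup_{ζ ∈ B(z)} |∫_{B(z,ζ)} (f - f̂(z)) dA| → 0` as `|z| → 1`. -/
def IsVWMO (f : ℂ → ℂ) : Prop :=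
  ∀ ε > (0:ℝ), ∃ r₀ < (1:ℝ), ∀ z ∈ unitDisc, r₀ ≤ ‖z‖ → ∀ ζ ∈ Bz z, wQuot f z ζ ≤ ε

/-- The Bergman-metric disc `D(z,1)` of radius `1` centered at `z`. -/
def Dball (z : ℂ) : Set ℂ :=
  {w : ℂ | ‖w‖ < 1 ∧ ‖(z - w) / (1 - (starRingEnd ℂ) w * z)‖ < Real.tanh 1}

/-- The hyperbolic average `f̂₁(z) = (1/|D(z,1)|) ∫_{D(z,1)} f dA` of a real-valued `f`. -/
def avg1 (f : ℂ → ℝ) (z : ℂ) : ℝ := ((dA (Dball z)).toReal)⁻¹ * ∫ w in Dball z, f w ∂dA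

/-- The mean oscillation `(1/|D(z,1)|) ∫_{D(z,1)} |f - f̂₁(z)| dA` of a real-valued `f`. -/
def meanOsc1 (f : ℂ → ℝ) (z : ℂ) : ℝ :=
  ((dA (Dball z)).toReal)⁻¹ * ∫ ξ in Dball z, |f ξ - avg1 f z| ∂dA

/-- The Berezin transform `f̃(z) = ∫_𝔻 f(w) |k_z(w)|² dA(w)`,
where `k_z(w) = (1-|z|²)/(1-w z̄)²`. -/
def berezin (f : ℂ → ℂ) (z : ℂ) : ℂ :=
  ∫ w in unitDisc, f w * ((((1 - ‖z‖ ^ 2) ^ 2 / ‖1 - w * (starRingEnd ℂ) z‖ ^ 4 : ℝ)) : ℂ) ∂dA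

/-- The example symbol of Section 4:
`f(r e^{iθ}) = (1/(r (1-r)^{b-β})) sin(1/(1-r)^b)` for `r ≥ 1/2`, and `1` for `r < 1/2`. -/
def fEx (b β : ℝ) (z : ℂ) : ℝ :=
  if ‖z‖ < 1 / 2 then 1
  else (1 / (‖z‖ * (1 - ‖z‖) ^ (b - β))) * Real.sin (1 / (1 - ‖z‖) ^ b)

end

/-!
In polar coordinates `B(z̃, ζ)` is the rectangle `[|z̃|, |ζ|] × [θ̃₁, θ̃₂]`, and its four corners
`w` lie in `B(z)`. Since adjacent polar rectangles overlap only in a circle arc or a segment of a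
ray, both null sets, inclusion–exclusion writes `∫_{B(z̃,ζ)} (f - f̂(z))` as a signed sum of the
four integrals over `B(z, w)`. Hence the quantity in question is at most four times
`sup_{w ∈ B(z)} (1/|B(z)|) |∫_{B(z,w)} (f - f̂(z))|`, which tends to `0` by the VWMO condition.
-/

open MeasureTheory Set Complex

instance : IsFiniteMeasureOnCompacts dA :=
  IsFiniteMeasureOnCompacts.smul volume (ENNReal.inv_ne_top.2 (by simp [Real.pi_pos]))

lemma dA_absolutelyContinuous : dA ≪ volume := Measure.smul_absolutelyContinuous

lemma norm_ofReal_mul_exp_mul_I {ρ : ℝ} (hρ : 0 ≤ ρ) (φ : ℝ) :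
    ‖(ρ : ℂ) * exp (φ * I)‖ = ρ := by
  rw [norm_mul, norm_exp_ofReal_mul_I, mul_one, norm_real, Real.norm_of_nonneg hρ]

lemma toIcoMod_arg_ofReal_mul_exp_mul_I {ρ : ℝ} (hρ : 0 < ρ) {a φ : ℝ}
    (hφ : φ ∈ Ico a (a + 2 * Real.pi)) :
    toIcoMod Real.two_pi_pos a (arg ((ρ : ℂ) * exp (φ * I))) = φ := by
  rw [arg_real_mul _ hρ, arg_exp_mul_I, toIcoMod_toIocMod, toIcoMod_eq_self]
  exact hφ

lemma volume_span_singleton (e : ℂ) : volume ((ℝ ∙ e : Submodule ℝ ℂ) : Set ℂ) = 0 := by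
  refine Measure.addHaar_submodule volume _ fun htop => ?_
  have h := finrank_span_le_card (R := ℝ) ({e} : Set ℂ)
  rw [htop, finrank_top, Complex.finrank_real_complex] at h
  simp at h

lemma norm_sub_sub_add_le {E : Type*} [SeminormedAddCommGroup E] (a b c d : E) :
    ‖a - b - c + d‖ ≤ ‖a‖ + ‖b‖ + ‖c‖ + ‖d‖ := by
  linarith [norm_add_le (a - b - c) d, norm_sub_le (a - b) c, norm_sub_le a b]

section PolarRect

lemma polarRect_subset_polarRect {a b c d a' b' c' d' : ℝ} (ha : a' ≤ a) (hb : b ≤ b')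
    (hc : c' ≤ c) (hd : d ≤ d') : polarRect a b c d ⊆ polarRect a' b' c' d' := by
  rintro w ⟨ρ, φ, h₁, h₂, h₃, h₄, rfl⟩
  exact ⟨ρ, φ, ha.trans h₁, h₂.trans hb, hc.trans h₃, h₄.trans hd, rfl⟩

lemma isCompact_polarRect (a b c d : ℝ) : IsCompact (polarRect a b c d) := by
  have : polarRect a b c d =
      (fun p : ℝ × ℝ => (p.1 : ℂ) * exp (p.2 * I)) '' (Icc a b ×ˢ Icc c d) := by
    ext w
    constructor
    · rintro ⟨ρ, φ, h₁, h₂, h₃, h₄, rfl⟩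
      exact ⟨(ρ, φ), ⟨⟨h₁, h₂⟩, h₃, h₄⟩, rfl⟩
    · rintro ⟨⟨ρ, φ⟩, ⟨⟨h₁, h₂⟩, h₃, h₄⟩, rfl⟩
      exact ⟨ρ, φ, h₁, h₂, h₃, h₄, rfl⟩
  rw [this]
  exact (isCompact_Icc.prod isCompact_Icc).image (by fun_prop)

lemma polarRect_eq_union_radial {a m b : ℝ} (c d : ℝ) (ham : a ≤ m) (hmb : m ≤ b) :
    polarRect a b c d = polarRect a m c d ∪ polarRect m b c d := by
  refine Subset.antisymm ?_ (union_subset (polarRect_subset_polarRect le_rfl hmb le_rfl le_rfl)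
    (polarRect_subset_polarRect ham le_rfl le_rfl le_rfl))
  rintro w ⟨ρ, φ, h₁, h₂, h₃, h₄, rfl⟩
  rcases le_total ρ m with h | h
  · exact Or.inl ⟨ρ, φ, h₁, h, h₃, h₄, rfl⟩
  · exact Or.inr ⟨ρ, φ, h, h₂, h₃, h₄, rfl⟩

lemma polarRect_eq_union_angular (a b : ℝ) {c m d : ℝ} (hcm : c ≤ m) (hmd : m ≤ d) :
    polarRect a b c d = polarRect a b c m ∪ polarRect a b m d := by
  refine Subset.antisymm ?_ (union_subset (polarRect_subset_polarRect le_rfl le_rfl le_rfl hmd)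
    (polarRect_subset_polarRect le_rfl le_rfl hcm le_rfl))
  rintro w ⟨ρ, φ, h₁, h₂, h₃, h₄, rfl⟩
  rcases le_total φ m with h | h
  · exact Or.inl ⟨ρ, φ, h₁, h₂, h₃, h, rfl⟩
  · exact Or.inr ⟨ρ, φ, h₁, h₂, h, h₄, rfl⟩

lemma polarRect_inter_radial_subset_sphere {a : ℝ} (ha : 0 ≤ a) (m b c d : ℝ) :
    polarRect a m c d ∩ polarRect m b c d ⊆ Metric.sphere 0 m := by
  rintro w ⟨⟨ρ, φ, h₁, h₂, -, -, rfl⟩, ⟨ρ', φ', h₁', -, -, -, hw⟩⟩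
  have hρ : 0 ≤ ρ := ha.trans h₁
  have hρ' : 0 ≤ ρ' := hρ.trans (h₂.trans h₁')
  rw [mem_sphere_zero_iff_norm, norm_ofReal_mul_exp_mul_I hρ]
  have := congrArg norm hw
  rw [norm_ofReal_mul_exp_mul_I hρ, norm_ofReal_mul_exp_mul_I hρ'] at this
  linarith

/-- Polar coordinates are unique on a sector of opening less than `2π`. -/
lemma polarRect_inter_angular_subset_span {a : ℝ} (ha : 0 < a) (b : ℝ) {c m d : ℝ}
    (hd : d < c + 2 * Real.pi) :
    polarRect a b c m ∩ polarRect a b m d ⊆ (ℝ ∙ exp (m * I) : Submodule ℝ ℂ) := by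
  rintro w ⟨⟨ρ, φ, h₁, -, h₃, h₄, rfl⟩, ⟨ρ', φ', h₁', -, h₃', h₄', hw⟩⟩
  have hφφ' : φ = φ' := by
    rw [← toIcoMod_arg_ofReal_mul_exp_mul_I (ha.trans_le h₁) ⟨h₃, by linarith⟩, hw,
      toIcoMod_arg_ofReal_mul_exp_mul_I (ha.trans_le h₁') ⟨by linarith, by linarith⟩]
  rw [le_antisymm h₄ (hφφ' ▸ h₃'), ← real_smul]
  exact Submodule.smul_mem _ ρ (Submodule.mem_span_singleton_self _)

variable {μ : Measure ℂ} {g : ℂ → ℂ}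

lemma setIntegral_polarRect_radial_split (hμ : μ ≪ volume) {a m b : ℝ} (c d : ℝ) (ha : 0 ≤ a)
    (ham : a ≤ m) (hmb : m ≤ b) (hg : IntegrableOn g (polarRect a b c d) μ) :
    ∫ w in polarRect a b c d, g w ∂μ =
      (∫ w in polarRect a m c d, g w ∂μ) + ∫ w in polarRect m b c d, g w ∂μ := by
  rw [polarRect_eq_union_radial c d ham hmb] at hg ⊢
  exact setIntegral_union₀
    (hμ (measure_mono_null (polarRect_inter_radial_subset_sphere ha m b c d)
      (Measure.addHaar_sphere volume 0 m)))
    (isCompact_polarRect m b c d).measurableSet.nullMeasurableSet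
    hg.left_of_union hg.right_of_union

lemma setIntegral_polarRect_angular_split (hμ : μ ≪ volume) {a : ℝ} (b : ℝ) {c m d : ℝ}
    (ha : 0 < a) (hcm : c ≤ m) (hmd : m ≤ d) (hd : d < c + 2 * Real.pi)
    (hg : IntegrableOn g (polarRect a b c d) μ) :
    ∫ w in polarRect a b c d, g w ∂μ =
      (∫ w in polarRect a b c m, g w ∂μ) + ∫ w in polarRect a b m d, g w ∂μ := by
  rw [polarRect_eq_union_angular a b hcm hmd] at hg ⊢
  exact setIntegral_union₀
    (hμ (measure_mono_null (polarRect_inter_angular_subset_span ha b hd)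
      (volume_span_singleton _)))
    (isCompact_polarRect a b m d).measurableSet.nullMeasurableSet
    hg.left_of_union hg.right_of_union

lemma setIntegral_polarRect_eq_corners (hμ : μ ≪ volume) {r a b θ c d : ℝ} (hr : 0 < r)
    (hra : r ≤ a) (hab : a ≤ b) (hθc : θ ≤ c) (hcd : c ≤ d) (hd : d < θ + 2 * Real.pi)
    (hg : IntegrableOn g (polarRect r b θ d) μ) :
    ∫ w in polarRect a b c d, g w ∂μ =
      (∫ w in polarRect r b θ d, g w ∂μ) - (∫ w in polarRect r a θ d, g w ∂μ)
        - (∫ w in polarRect r b θ c, g w ∂μ) + ∫ w in polarRect r a θ c, g w ∂μ := by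
  have hsub {a' b' c' d'} (ha' : r ≤ a') (hb' : b' ≤ b) (hc' : θ ≤ c') (hd' : d' ≤ d) :
      IntegrableOn g (polarRect a' b' c' d') μ :=
    hg.mono_set (polarRect_subset_polarRect ha' hb' hc' hd')
  have h₁ := setIntegral_polarRect_radial_split hμ θ d hr.le hra hab hg
  have h₂ := setIntegral_polarRect_angular_split hμ b (hr.trans_le hra) hθc hcd
    (by linarith) (hsub hra le_rfl le_rfl le_rfl)
  have h₃ := setIntegral_polarRect_radial_split hμ θ c hr.le hra hab
    (hsub le_rfl le_rfl le_rfl hcd)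
  linear_combination -h₁ - h₂ + h₃

end PolarRect

section Bz

variable {z : ℂ}

lemma Bz_subset_unitDisc (hz : z ∈ unitDisc) : Bz z ⊆ unitDisc := by
  rintro w ⟨ρ, φ, h₁, h₂, -, -, rfl⟩
  have hz' : ‖z‖ < 1 := hz
  change ‖_‖ < 1
  rw [norm_ofReal_mul_exp_mul_I ((norm_nonneg z).trans h₁)]
  linarith

lemma theta_add_width_lt (z : ℂ) :
    theta z + Real.pi * (1 - ‖z‖) < theta z + 2 * Real.pi := by
  nlinarith [norm_nonneg z, Real.pi_pos]

lemma polarCoords_of_mem_Bz (hz : 0 < ‖z‖) {ζ : ℂ} (hζ : ζ ∈ Bz z) :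
    ‖z‖ ≤ ‖ζ‖ ∧ ‖ζ‖ ≤ 1 - (1 - ‖z‖) / 2 ∧
      theta z ≤ angFrom z ζ ∧ angFrom z ζ ≤ theta z + Real.pi * (1 - ‖z‖) := by
  obtain ⟨ρ, φ, h₁, h₂, h₃, h₄, rfl⟩ := hζ
  have hρ : 0 < ρ := hz.trans_le h₁
  rw [norm_ofReal_mul_exp_mul_I hρ.le, angFrom,
    toIcoMod_arg_ofReal_mul_exp_mul_I hρ ⟨h₃, h₄.trans_lt (theta_add_width_lt z)⟩]
  exact ⟨h₁, h₂, h₃, h₄⟩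

lemma wQuot_ofReal_mul_exp_mul_I (f : ℂ → ℂ) {ρ φ : ℝ} (hρ : 0 < ρ)
    (hφ : φ ∈ Ico (theta z) (theta z + 2 * Real.pi)) :
    wQuot f z (ρ * exp (φ * I)) =
      ((dA (Bz z)).toReal)⁻¹ * ‖∫ ξ in polarRect ‖z‖ ρ (theta z) φ, (f ξ - avg f z) ∂dA‖ := by
  rw [wQuot, Bzz, norm_ofReal_mul_exp_mul_I hρ.le, angFrom,
    toIcoMod_arg_ofReal_mul_exp_mul_I hρ hφ]

lemma inv_mul_norm_setIntegral_Bsub_le {f : ℂ → ℂ} {C : ℝ} (hz : 0 < ‖z‖)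
    (hf : IntegrableOn f (Bz z) dA) (hC : ∀ ζ ∈ Bz z, wQuot f z ζ ≤ C)
    {ztil ζ : ℂ} (hztil : ztil ∈ Bz z) (hζ : ζ ∈ Bz z) (hprec : precSim z ztil ζ) :
    ((dA (Bz z)).toReal)⁻¹ * ‖∫ ξ in Bsub z ztil ζ, (f ξ - avg f z) ∂dA‖ ≤ 4 * C := by
  obtain ⟨ha₁, ha₂, hc₁, hc₂⟩ := polarCoords_of_mem_Bz hz hztil
  obtain ⟨hb₁, hb₂, hd₁, hd₂⟩ := polarCoords_of_mem_Bz hz hζ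
  have hcorner {ρ φ : ℝ} (h₁ : ‖z‖ ≤ ρ) (h₂ : ρ ≤ 1 - (1 - ‖z‖) / 2) (h₃ : theta z ≤ φ)
      (h₄ : φ ≤ theta z + Real.pi * (1 - ‖z‖)) :
      ((dA (Bz z)).toReal)⁻¹ * ‖∫ ξ in polarRect ‖z‖ ρ (theta z) φ, (f ξ - avg f z) ∂dA‖ ≤ C := by
    rw [← wQuot_ofReal_mul_exp_mul_I f (hz.trans_le h₁) ⟨h₃, h₄.trans_lt (theta_add_width_lt z)⟩]
    exact hC _ ⟨ρ, φ, h₁, h₂, h₃, h₄, rfl⟩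
  have hg : IntegrableOn (fun ξ => f ξ - avg f z)
      (polarRect ‖z‖ ‖ζ‖ (theta z) (angFrom z ζ)) dA :=
    (hf.sub (integrableOn_const (isCompact_polarRect _ _ _ _).measure_lt_top.ne)).mono_set
      (polarRect_subset_polarRect le_rfl hb₂ le_rfl hd₂)
  rw [Bsub, setIntegral_polarRect_eq_corners dA_absolutelyContinuous hz ha₁ hprec.1 hc₁ hprec.2
    (hd₂.trans_lt (theta_add_width_lt z)) hg]
  have hk : 0 ≤ ((dA (Bz z)).toReal)⁻¹ := inv_nonneg.2 ENNReal.toReal_nonneg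
  refine (mul_le_mul_of_nonneg_left (norm_sub_sub_add_le _ _ _ _) hk).trans ?_
  linarith [hcorner hb₁ hb₂ hd₁ hd₂, hcorner ha₁ ha₂ hd₁ hd₂, hcorner hb₁ hb₂ hc₁ hc₂,
    hcorner ha₁ ha₂ hc₁ hc₂]

end Bz

theorem bwmo_vwmo_subrect_vanishing_general (f : ℂ → ℂ)
    (hf : MeasureTheory.LocallyIntegrableOn f unitDisc dA)
    (hvwmo : IsVWMO f) :
    ∀ ε > (0:ℝ), ∃ r₀ < (1:ℝ), ∀ z ∈ unitDisc, r₀ ≤ ‖z‖ →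
      ∀ ztil ∈ Bz z, ∀ ζ ∈ Bz z, precSim z ztil ζ →
        ((dA (Bz z)).toReal)⁻¹ * ‖∫ ξ in Bsub z ztil ζ, (f ξ - avg f z) ∂dA‖ ≤ ε := by
  intro ε hε
  obtain ⟨r₁, hr₁, hvanish⟩ := hvwmo (ε / 4) (by positivity)
  refine ⟨max r₁ (1 / 2), max_lt hr₁ (by norm_num), fun z hz hrz ztil hztil ζ hζ hprec => ?_⟩
  have hz₀ : 0 < ‖z‖ := by linarith [le_max_right r₁ (1 / 2)]
  have hfz : IntegrableOn f (Bz z) dA :=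
    hf.integrableOn_compact_subset (Bz_subset_unitDisc hz) (isCompact_polarRect _ _ _ _)
  have := inv_mul_norm_setIntegral_Bsub_le hz₀ hfz
    (hvanish z hz ((le_max_left _ _).trans hrz)) hztil hζ hprec
  linarith

/-- If a locally integrable `f` on `𝔻` satisfies both the BWMO and the VWMO
conditions, then
`(1/|B(z)|) sup { |∫_{B(z̃,ζ)} (f(ξ) - f̂(z)) dA(ξ)| : z̃, ζ ∈ B(z), z̃ ≾ ζ } → 0`
as `|z| → 1`. -/
theorem bwmo_vwmo_subrect_vanishing (f : ℂ → ℂ)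
    (hf : MeasureTheory.LocallyIntegrableOn f unitDisc dA)
    (hbwmo : IsBWMO f) (hvwmo : IsVWMO f) :
    ∀ ε > (0:ℝ), ∃ r₀ < (1:ℝ), ∀ z ∈ unitDisc, r₀ ≤ ‖z‖ →
      ∀ ztil ∈ Bz z, ∀ ζ ∈ Bz z, precSim z ztil ζ →
        ((dA (Bz z)).toReal)⁻¹ * ‖∫ ξ in Bsub z ztil ζ, (f ξ - avg f z) ∂dA‖ ≤ ε :=
  bwmo_vwmo_subrect_vanishing_general f hf hvwmo
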